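/- (Lemma 3, safe node consensus.) Assume n >= 2f+1 and the set D of dishonest players has exactly f elements. Let ζ be a route of depth d (1 ≤ d ≤ f) whose primary is honest and whose first d−1 entries are all dishonest (a safe node: the primary is the first honest player appearing on the route). Then for every adversary assignment (w, u) satisfying (A1)-(A4) and every honest backup i of ζ, the gathering value satisfies g(ζ, i) = w(ζ, i); in particular all honest backups of ζ reach consensus on the common multicast value of ζ's honest primary. -/

import Mathlib

namespace QBA

/-- The majority function: returns the element of `M` occurring most often in `L`,
with ties broken by taking the least such element in the linear order,
and returning the default `d` on the empty list. -/
def maj {M : Type*} [LinearOrder M] (d : M) (L : List M) : M :=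
  let s := L.toFinset.filter fun m => ∀ m' ∈ L.toFinset, L.count m' ≤ L.count m
  if h : s.Nonempty then s.min' h else d

/-- A route: a list of pairwise distinct players with head `S`
and length (depth) between `1` and `f`.  Its primary is its last entry,
and its backups are the players not occurring in it. -/
def IsRoute (n f : ℕ) (S : Fin n) (ζ : List (Fin n)) : Prop :=
  ζ.Nodup ∧ ζ.head? = some S ∧ 1 ≤ ζ.length ∧ ζ.length ≤ f

/-- The primary (last entry) of `ζ` is honest (not in `D`). -/
def HonestPrimary {n : ℕ} (D : Finset (Fin n)) (ζ : List (Fin n)) : Prop :=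
  ∀ q ∈ ζ.getLast?, q ∉ D

/-- An adversary assignment `(w, u)`: `w ζ i` is the message backup `i` accepts from
`ζ`'s primary, `u ζ j i` the message forwarder `j` forwards to verifier `i`,
subject to conditions (A1)–(A4). -/
structure Adversary (n f : ℕ) (S : Fin n) (D : Finset (Fin n)) (M : Type*) where
  w : List (Fin n) → Fin n → M
  u : List (Fin n) → Fin n → Fin n → M
  A1 : ∀ ζ : List (Fin n), IsRoute n f S ζ → HonestPrimary D ζ →
    ∀ i i' : Fin n, i ∉ ζ → i' ∉ ζ → w ζ i = w ζ i'
  A2 : ∀ (ζ : List (Fin n)) (p : Fin n), IsRoute n f S ζ → p ∉ ζ → p ∉ D →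
    IsRoute n f S (ζ ++ [p]) → ∀ i : Fin n, i ∉ ζ ++ [p] → w (ζ ++ [p]) i = w ζ p
  A3 : ∀ (ζ : List (Fin n)) (p : Fin n), IsRoute n f S ζ → HonestPrimary D ζ →
    p ∉ ζ → p ∈ D → IsRoute n f S (ζ ++ [p]) →
    ∀ i : Fin n, i ∉ ζ ++ [p] → i ∉ D → w (ζ ++ [p]) i = w ζ p
  A4 : ∀ (ζ : List (Fin n)) (j i : Fin n), IsRoute n f S ζ → j ∉ ζ → i ∉ ζ → i ≠ j →
    (j ∉ D ∨ HonestPrimary D ζ) → u ζ j i = w ζ j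

/-- Fuel-indexed gathering value; for a route `ζ` the fuel is `f - ζ.length`, so fuel `0`
corresponds to the bottom layer `ζ.length = f`. -/
def gAux {n f : ℕ} {S : Fin n} {D : Finset (Fin n)} {M : Type*} [LinearOrder M] [Inhabited M]
    (A : Adversary n f S D M) : ℕ → List (Fin n) → Fin n → M
  | 0, ζ, i =>
      maj default (A.w ζ i ::
        (((List.finRange n).filter fun j => decide (j ∉ ζ ∧ j ≠ i)).map fun j => A.u ζ j i))
  | k + 1, ζ, i =>
      maj default (((List.finRange n).filter fun j => decide (j ∉ ζ)).map
        fun j => if j = i then A.w ζ i else gAux A k (ζ ++ [j]) i)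

/-- The gathering value `g(ζ, i)` of an honest backup `i` of the route `ζ`,
defined by downward recursion on depth: at the bottom layer `ζ.length = f` it is the
majority of `w(ζ, i)` together with `u(ζ, j, i)` over all backups `j ≠ i` of `ζ`;
above the bottom layer it is the majority, over all backups `j` of `ζ`, of
`g(ζ ++ [j], i)` (where the `j = i` entry is `w(ζ, i)`). -/
def g {n f : ℕ} {S : Fin n} {D : Finset (Fin n)} {M : Type*} [LinearOrder M] [Inhabited M]
    (A : Adversary n f S D M) (ζ : List (Fin n)) (i : Fin n) : M :=
  gAux A (f - ζ.length) ζ i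

/-! The gathering value is a nested majority. For a route with `b` backups of which `e` are
dishonest, induct downward on depth with two invariants for a value `v`: `HonestBackupsAgree`
(every honest backup accepted `v`, and `2e < b`) and `AllBackupsAgree` (the primary is honest,
every backup accepted `v`, and `2e ≤ b`). Under the first, the honest backups are a strict
majority, and the child through an honest backup satisfies the second by (A2). Under the
second, either `2e < b` and the first holds, or `2e = b` and the dishonest backups together
with `i` itself are a strict majority; the child through a dishonest backup satisfies the
first by (A3), since appending a dishonest player lowers both `b` and `e` by one. A safe node
of depth `d` satisfies the second for the value of its primary, because its first `d - 1`
entries use up `d - 1` of the at most `f` dishonest players. -/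

theorem _root_.List.count_add_count_le_length {α : Type*} [DecidableEq α] {a b : α}
    (hab : a ≠ b) (L : List α) : L.count a + L.count b ≤ L.length := by
  induction L with
  | nil => simp
  | cons x L ih =>
    simp only [List.count_cons, List.length_cons, beq_iff_eq]
    split_ifs <;> grind

section Majority

variable {M : Type*} [LinearOrder M]

theorem maj_eq_of_length_lt_two_mul_count (d : M) {L : List M} {v : M}
    (h : L.length < 2 * L.count v) : maj d L = v := by
  have hv : v ∈ L := List.count_pos_iff.mp (by omega)
  have hs : (L.toFinset.filter fun m => ∀ m' ∈ L.toFinset, L.count m' ≤ L.count m) = {v} := by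
    ext m
    simp only [Finset.mem_filter, List.mem_toFinset, Finset.mem_singleton]
    constructor
    · rintro ⟨-, hm⟩
      by_contra hmv
      have := hm v hv
      have := L.count_add_count_le_length hmv
      omega
    · intro hm
      rw [hm]
      refine ⟨hv, fun m' _ => ?_⟩
      by_cases hm' : m' = v
      · rw [hm']
      · have := L.count_add_count_le_length hm'
        omega
  simp only [maj, hs, Finset.singleton_nonempty, dif_pos, Finset.min'_singleton]

theorem maj_map_eq_of_length_lt_two_mul_card {α : Type*} [DecidableEq α] (d v : M)
    {l : List α} {F : α → M} {T : Finset α} (hTl : T ⊆ l.toFinset) (hTv : ∀ x ∈ T, F x = v)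
    (h : l.length < 2 * T.card) : maj d (l.map F) = v := by
  apply maj_eq_of_length_lt_two_mul_count
  have hT : T.card ≤ (l.map F).count v :=
    calc T.card ≤ (l.filter (F · == v)).toFinset.card :=
          Finset.card_le_card fun x hx => by simpa [hTv x hx] using hTl hx
      _ ≤ (l.filter (F · == v)).length := List.toFinset_card_le _
      _ = (l.map F).count v := by
          rw [List.count_eq_countP, List.countP_map, List.countP_eq_length_filter]
          rfl
  rw [List.length_map]
  omega

end Majority

section Routes

variable {n f : ℕ} {S : Fin n} {D : Finset (Fin n)} {ζ : List (Fin n)} {j : Fin n}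

theorem IsRoute.concat (hζ : IsRoute n f S ζ) (hlen : ζ.length < f) (hj : j ∉ ζ) :
    IsRoute n f S (ζ ++ [j]) := by
  obtain ⟨hnd, hhead, hpos, -⟩ := hζ
  refine ⟨hnd.append (List.nodup_singleton j) (by simpa using hj), ?_, by simp, by simpa⟩
  cases ζ with
  | nil => simp at hpos
  | cons a t => simpa using hhead

theorem honestPrimary_concat (hj : j ∉ D) : HonestPrimary D (ζ ++ [j]) := by
  simpa [HonestPrimary] using hj

theorem card_compl_toFinset_concat (hj : j ∉ ζ) :
    (ζ ++ [j]).toFinsetᶜ.card + 1 = ζ.toFinsetᶜ.card := by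
  rw [show (ζ ++ [j]).toFinset = insert j ζ.toFinset by simp, Finset.compl_insert,
    Finset.card_erase_add_one (by simpa using hj)]

theorem sdiff_toFinset_concat_of_notMem (hj : j ∉ D) :
    D \ (ζ ++ [j]).toFinset = D \ ζ.toFinset := by
  rw [show (ζ ++ [j]).toFinset = insert j ζ.toFinset by simp, Finset.sdiff_insert,
    Finset.erase_eq_of_notMem (by simp [hj])]

theorem card_sdiff_toFinset_concat_of_mem (hjD : j ∈ D) (hj : j ∉ ζ) :
    (D \ (ζ ++ [j]).toFinset).card + 1 = (D \ ζ.toFinset).card := by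
  rw [show (ζ ++ [j]).toFinset = insert j ζ.toFinset by simp, Finset.sdiff_insert,
    Finset.card_erase_add_one (by simp [hjD, hj])]

theorem two_mul_card_sdiff_toFinset_le (hζ : IsRoute n f S ζ)
    (hpre : ∀ q ∈ ζ.dropLast, q ∈ D) (hD : D.card ≤ f) (hnf : 2 * f + 1 ≤ n) :
    2 * (D \ ζ.toFinset).card ≤ ζ.toFinsetᶜ.card := by
  have hdrop_nodup := hζ.1.sublist (List.dropLast_sublist ζ)
  have hb : ζ.toFinsetᶜ.card = n - ζ.length := by
    rw [Finset.card_compl, Fintype.card_fin, List.toFinset_card_of_nodup hζ.1]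
  have he : (D \ ζ.toFinset).card ≤ (D \ ζ.dropLast.toFinset).card :=
    Finset.card_le_card <| Finset.sdiff_subset_sdiff le_rfl fun q hq => by
      simpa using (List.dropLast_sublist ζ).subset (List.mem_toFinset.mp hq)
  rw [Finset.card_sdiff_of_subset fun q hq => hpre q (List.mem_toFinset.mp hq),
    List.toFinset_card_of_nodup hdrop_nodup, List.length_dropLast] at he
  have hlen := hζ.2.2
  omega

end Routes

section Gathering

variable {n f : ℕ} {S : Fin n} {D : Finset (Fin n)} {M : Type*} [LinearOrder M] [Inhabited M]
  (A : Adversary n f S D M)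

def HonestBackupsAgree (ζ : List (Fin n)) (v : M) : Prop :=
  (∀ j ∉ ζ, j ∉ D → A.w ζ j = v) ∧ 2 * (D \ ζ.toFinset).card < ζ.toFinsetᶜ.card

def AllBackupsAgree (ζ : List (Fin n)) (v : M) : Prop :=
  HonestPrimary D ζ ∧ (∀ j ∉ ζ, A.w ζ j = v) ∧ 2 * (D \ ζ.toFinset).card ≤ ζ.toFinsetᶜ.card

variable {ζ : List (Fin n)} {i j : Fin n} {k : ℕ} {v : M}

/-- The entry for backup `j` in the majority defining `gAux A k ζ i`. -/
def entry : ℕ → List (Fin n) → Fin n → Fin n → M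
  | 0, ζ, i, j => if j = i then A.w ζ i else A.u ζ j i
  | k + 1, ζ, i, j => if j = i then A.w ζ i else gAux A k (ζ ++ [j]) i

theorem entry_self : entry A k ζ i i = A.w ζ i := by
  cases k <;> simp [entry]

theorem entry_zero_of_ne (hji : j ≠ i) : entry A 0 ζ i j = A.u ζ j i := by
  simp [entry, hji]

theorem entry_succ_of_ne (hji : j ≠ i) : entry A (k + 1) ζ i j = gAux A k (ζ ++ [j]) i := by
  simp [entry, hji]

theorem exists_gAux_eq_maj_map_entry (hi : i ∉ ζ) :
    ∃ l : List (Fin n), l.Nodup ∧ l.toFinset = ζ.toFinsetᶜ ∧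
      gAux A k ζ i = maj default (l.map (entry A k ζ i)) := by
  cases k with
  | zero =>
    refine ⟨i :: (List.finRange n).filter fun j => decide (j ∉ ζ ∧ j ≠ i), ?_, ?_, ?_⟩
    · exact ((List.nodup_finRange n).filter _).cons (by simp)
    · ext j
      by_cases hji : j = i <;> simp [hji, hi]
    · rw [List.map_cons, entry_self, List.map_congr_left fun j hj =>
        entry_zero_of_ne A (by simp_all)]
      rfl
  | succ k =>
    exact ⟨(List.finRange n).filter fun j => decide (j ∉ ζ),
      (List.nodup_finRange n).filter _, by ext; simp, rfl⟩

theorem gAux_eq_of_entries (hi : i ∉ ζ) {T : Finset (Fin n)} (hT : T ⊆ ζ.toFinsetᶜ)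
    (hTv : ∀ j ∈ T, entry A k ζ i j = v) (h : ζ.toFinsetᶜ.card < 2 * T.card) :
    gAux A k ζ i = v := by
  obtain ⟨l, hl, hls, hg⟩ := exists_gAux_eq_maj_map_entry A (k := k) hi
  rw [hg]
  rw [← hls, List.toFinset_card_of_nodup hl] at h
  exact maj_map_eq_of_length_lt_two_mul_card _ _ (hls ▸ hT) hTv h

theorem gAux_eq_of_agree_of_entries (hi : i ∉ ζ) (hiD : i ∉ D)
    (honest_entry : HonestBackupsAgree A ζ v → ∀ j ∉ ζ, j ∉ D → j ≠ i → entry A k ζ i j = v)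
    (dishonest_entry : AllBackupsAgree A ζ v → ∀ j ∉ ζ, j ∈ D → entry A k ζ i j = v) :
    (HonestBackupsAgree A ζ v → gAux A k ζ i = v) ∧
      (AllBackupsAgree A ζ v → gAux A k ζ i = v) := by
  have hsplit : (ζ.toFinsetᶜ \ D).card + (D \ ζ.toFinset).card = ζ.toFinsetᶜ.card := by
    rw [← Finset.card_sdiff_add_card_inter ζ.toFinsetᶜ D, Finset.inter_comm,
      ← Finset.sdiff_eq_inter_compl]
  have honest : HonestBackupsAgree A ζ v → gAux A k ζ i = v := by
    intro hagree
    have ⟨hw, hb⟩ := hagree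
    refine gAux_eq_of_entries A hi (T := ζ.toFinsetᶜ \ D) Finset.sdiff_subset
      (fun j hj => ?_) (by omega)
    simp only [Finset.mem_sdiff, Finset.mem_compl, List.mem_toFinset] at hj
    by_cases hji : j = i
    · rw [hji, entry_self, hw i hi hiD]
    · exact honest_entry hagree j hj.1 hj.2 hji
  refine ⟨honest, fun hagree => ?_⟩
  have ⟨_, hw, hb⟩ := hagree
  rcases hb.lt_or_eq with hlt | htie
  · exact honest ⟨fun j hj _ => hw j hj, hlt⟩
  · have hiT : i ∉ D \ ζ.toFinset := by simp [hiD]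
    refine gAux_eq_of_entries A hi (T := insert i (D \ ζ.toFinset))
      (Finset.insert_subset (by simpa using hi) fun j hj => by simp_all) (fun j hj => ?_)
      (by rw [Finset.card_insert_of_notMem hiT]; omega)
    rcases Finset.mem_insert.mp hj with rfl | hj
    · rw [entry_self, hw j hi]
    · simp only [Finset.mem_sdiff, List.mem_toFinset] at hj
      exact dishonest_entry hagree j hj.2 hj.1

theorem gAux_eq_of_agree (hζ : IsRoute n f S ζ) (hk : ζ.length + k = f) (hi : i ∉ ζ)
    (hiD : i ∉ D) :
    (HonestBackupsAgree A ζ v → gAux A k ζ i = v) ∧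
      (AllBackupsAgree A ζ v → gAux A k ζ i = v) := by
  induction k generalizing ζ with
  | zero =>
    refine gAux_eq_of_agree_of_entries A hi hiD (fun ⟨hw, _⟩ j hj hjD hji => ?_)
      (fun ⟨hH, hw, _⟩ j hj hjD => ?_)
    · rw [entry_zero_of_ne A hji, A.A4 ζ j i hζ hj hi (Ne.symm hji) (.inl hjD), hw j hj hjD]
    · have hji : j ≠ i := ne_of_mem_of_not_mem hjD hiD
      rw [entry_zero_of_ne A hji, A.A4 ζ j i hζ hj hi (Ne.symm hji) (.inr hH), hw j hj]
  | succ k ih =>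
    have hlen : ζ.length < f := by omega
    refine gAux_eq_of_agree_of_entries A hi hiD (fun ⟨hw, hb⟩ j hj hjD hji => ?_)
      (fun ⟨hH, hw, hb⟩ j hj hjD => ?_)
    · have hζj := hζ.concat hlen hj
      have := card_compl_toFinset_concat hj
      rw [entry_succ_of_ne A hji]
      refine (ih hζj (by simp only [List.length_append, List.length_singleton]; omega)
        (by simp [hi, Ne.symm hji])).2
        ⟨honestPrimary_concat hjD,
          fun i' hi' => (A.A2 ζ j hζ hj hjD hζj i' hi').trans (hw j hj hjD), ?_⟩
      rw [sdiff_toFinset_concat_of_notMem hjD]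
      omega
    · have hζj := hζ.concat hlen hj
      have hji : j ≠ i := ne_of_mem_of_not_mem hjD hiD
      have := card_compl_toFinset_concat hj
      have := card_sdiff_toFinset_concat_of_mem hjD hj
      rw [entry_succ_of_ne A hji]
      refine (ih hζj (by simp only [List.length_append, List.length_singleton]; omega)
        (by simp [hi, Ne.symm hji])).1
        ⟨fun i' hi' hi'D => (A.A3 ζ j hζ hH hj hjD hζj i' hi' hi'D).trans (hw j hj), ?_⟩
      omega

end Gathering

theorem lemma3_safe_node_consensus_general
    {n f : ℕ} {S : Fin n} {D : Finset (Fin n)} {M : Type*} [LinearOrder M] [Inhabited M]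
    (hnf : 2 * f + 1 ≤ n) (hD : D.card = f)
    (A : Adversary n f S D M) (ζ : List (Fin n))
    (hζ : IsRoute n f S ζ) (hprim : HonestPrimary D ζ)
    (hpre : ∀ q ∈ ζ.dropLast, q ∈ D)
    (i : Fin n) (hi : i ∉ ζ) (hiH : i ∉ D) :
    g A ζ i = A.w ζ i := by
  have hlen : ζ.length ≤ f := hζ.2.2.2
  exact (gAux_eq_of_agree A hζ (k := f - ζ.length) (by omega) hi hiH).2
    ⟨hprim, fun j hj => A.A1 ζ hζ hprim j i hj hi,
      two_mul_card_sdiff_toFinset_le hζ hpre hD.le hnf⟩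

/-- **Lemma 3 (safe node consensus).** Assume `n ≥ 2f + 1` and the set `D` of
dishonest players has exactly `f` elements.  Let `ζ` be a route of depth `d`
(`1 ≤ d ≤ f`) whose primary is honest and whose first `d − 1` entries are all
dishonest (a safe node: the primary is the first honest player appearing on the
route).  Then for every adversary assignment `(w, u)` satisfying (A1)–(A4) and every
honest backup `i` of `ζ`, the gathering value satisfies `g(ζ, i) = w(ζ, i)`; in
particular all honest backups of `ζ` reach consensus on the common multicast value
of `ζ`'s honest primary. -/
theorem lemma3_safe_node_consensus
    {n f : ℕ} {S : Fin n} {D : Finset (Fin n)} {M : Type*} [LinearOrder M] [Inhabited M]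
    (hn : 2 ≤ n) (hf : 1 ≤ f) (hnf : 2 * f + 1 ≤ n) (hD : D.card = f)
    (A : Adversary n f S D M) (ζ : List (Fin n))
    (hζ : IsRoute n f S ζ) (hprim : HonestPrimary D ζ)
    (hpre : ∀ q ∈ ζ.dropLast, q ∈ D)
    (i : Fin n) (hi : i ∉ ζ) (hiH : i ∉ D) :
    g A ζ i = A.w ζ i :=
  lemma3_safe_node_consensus_general hnf hD A ζ hζ hprim hpre i hi hiH

end QBA
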